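/- For n > 1 and any nonempty antichain α of subsets of {1,...,n-1}, the interval [α ∨ {{n}}, α × {{n}}] is in bijection with the interval [{∅}, α]: every κ in the former can be written uniquely as α ∨ (κ' × {{n}}) for some κ' ∈ [{∅}, α], hence |[α ∨ {{n}}, α × {{n}}]| = |[{∅}, α]|. -/

import Mathlib

/-!
The inverse of `κ' ↦ α ∨ (κ' × {{n}})` is the link `κ ↦ {C \ {n} : n ∈ C ∈ κ}`. Since `n` lies
in no member of `α`, the product `κ' × {{n}}` just adjoins `n` to every member of `κ'`. Conversely,
a member of `κ ∈ [α ∨ {{n}}, α × {{n}}]` either contains `n`, and then comes from the link, or lies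
below some `A ∈ α`, and then equals `A` because `α ≤ κ` and `κ` is an antichain.
-/

open Finset

/-- Families of finite subsets of ℕ. -/
abbrev Fam := Finset (Finset ℕ)

/-- `α` is an antichain of subsets of `N`: all members are subsets of `N`
and no member is a (proper) subset of another. -/
def IsAC (N : Finset ℕ) (α : Fam) : Prop :=
  (∀ A ∈ α, A ⊆ N) ∧ ∀ A ∈ α, ∀ B ∈ α, A ⊆ B → A = B

instance (N : Finset ℕ) : DecidablePred (IsAC N) := fun α => by
  unfold IsAC; infer_instance

/-- The partial order on antichains: every member of `α` is contained in some member of `β`. -/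
def amle (α β : Fam) : Prop := ∀ A ∈ α, ∃ B ∈ β, A ⊆ B

instance (α β : Fam) : Decidable (amle α β) := by
  unfold amle; infer_instance

/-- `sup` of a family: its maximal elements under inclusion. -/
def maxels (S : Fam) : Fam := S.filter (fun A => ∀ B ∈ S, A ⊆ B → A = B)

/-- The span of an antichain: the union of its members. -/
def sp (α : Fam) : Finset ℕ := α.sup id

/-- Join: maximal elements of the union. -/
def joinAC (α β : Fam) : Fam := maxels (α ∪ β)

/-- Meet: maximal elements of the pairwise intersections. -/
def meetAC (α β : Fam) : Fam := maxels ((α ×ˢ β).image fun p => p.1 ∩ p.2)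

/-- Projection onto `M`: maximal elements of {A ∩ M : A ∈ α}. -/
def proj (M : Finset ℕ) (α : Fam) : Fam := maxels (α.image (· ∩ M))

/-- External product. -/
def xprod (α β : Fam) : Fam :=
  maxels ((α ×ˢ β).image fun p => (p.1 \ sp β) ∪ (p.2 \ sp α) ∪ (p.1 ∩ p.2))

/-- The finite set of all antichains of subsets of `N`. -/
def AMTf (N : Finset ℕ) : Finset Fam := N.powerset.powerset.filter (IsAC N)

/-- The interval `[a, b]` inside `AMTf N`, as a `Finset`. -/
def intervalF (N : Finset ℕ) (a b : Fam) : Finset Fam :=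
  (AMTf N).filter (fun κ => amle a κ ∧ amle κ b)

/-- The interval `[a, b]` of antichains of subsets of `N`, as a `Set`. -/
def intervalSet (N : Finset ℕ) (a b : Fam) : Set Fam :=
  {κ | IsAC N κ ∧ amle a κ ∧ amle κ b}

/-- n-ary join of a family indexed by the members of `σ`. -/
def bigJoin (σ : Fam) (κ : Finset ℕ → Fam) : Fam := maxels (σ.sup κ)

/-- n-ary external product of a family indexed by the members of `σ`. -/
noncomputable def bigX (σ : Fam) (κ : Finset ℕ → Fam) : Fam :=
  (σ.toList.map κ).foldr xprod {(∅ : Finset ℕ)}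

/-- Nonempty antichains of subsets of `S` with span exactly `S`. -/
def Upsf (S : Finset ℕ) : Finset Fam :=
  S.powerset.powerset.filter (fun κ => IsAC S κ ∧ κ ≠ ∅ ∧ sp κ = S)

lemma mem_maxels {S : Fam} {C : Finset ℕ} :
    C ∈ maxels S ↔ C ∈ S ∧ ∀ B ∈ S, C ⊆ B → C = B := by
  simp [maxels]

lemma exists_subset_mem_maxels {S : Fam} {A : Finset ℕ} (hA : A ∈ S) :
    ∃ B ∈ maxels S, A ⊆ B := by
  obtain ⟨B, hAB, hB⟩ := S.exists_le_maximal hA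
  exact ⟨B, mem_maxels.2 ⟨hB.prop, fun C hC hBC => hB.eq_of_le hC hBC⟩, hAB⟩

lemma maxels_eq_self {S : Fam} (hS : IsAntichain (· ⊆ ·) (S : Set (Finset ℕ))) :
    maxels S = S :=
  Finset.filter_true_of_mem fun _ hA _ hB hAB => hS.eq hA hB hAB

lemma IsAC.isAntichain {N : Finset ℕ} {α : Fam} (h : IsAC N α) :
    IsAntichain (· ⊆ ·) (α : Set (Finset ℕ)) :=
  fun _ hA _ hB hne hAB => hne (h.2 _ hA _ hB hAB)

lemma IsAC.notMem {N : Finset ℕ} {α : Fam} {n : ℕ} (h : IsAC N α) (hn : n ∉ N)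
    {A : Finset ℕ} (hA : A ∈ α) : n ∉ A :=
  fun hnA => hn (h.1 A hA hnA)

lemma isAC_maxels {N : Finset ℕ} {S : Fam} (hS : ∀ A ∈ S, A ⊆ N) : IsAC N (maxels S) :=
  ⟨fun A hA => hS A (mem_maxels.1 hA).1,
    fun _ hA B hB hAB => (mem_maxels.1 hA).2 B (mem_maxels.1 hB).1 hAB⟩

lemma mem_intervalF {N : Finset ℕ} {a b κ : Fam} :
    κ ∈ intervalF N a b ↔ IsAC N κ ∧ amle a κ ∧ amle κ b := by
  simp only [intervalF, AMTf, mem_filter, mem_powerset]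
  exact ⟨fun ⟨⟨_, hκ⟩, hab⟩ => ⟨hκ, hab⟩,
    fun ⟨hκ, hab⟩ => ⟨⟨fun A hA => mem_powerset.2 (hκ.1 A hA), hκ⟩, hab⟩⟩

section amle

variable {α β γ : Fam}

lemma amle_of_subset (h : α ⊆ β) : amle α β :=
  fun A hA => ⟨A, h hA, subset_rfl⟩

lemma amle.trans (hαβ : amle α β) (hβγ : amle β γ) : amle α γ := fun A hA => by
  obtain ⟨B, hB, hAB⟩ := hαβ A hA
  obtain ⟨C, hC, hBC⟩ := hβγ B hB
  exact ⟨C, hC, hAB.trans hBC⟩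

lemma amle_singleton_iff {A : Finset ℕ} : amle {A} γ ↔ ∃ C ∈ γ, A ⊆ C := by
  simp [amle]

lemma amle_maxels (S : Fam) : amle S (maxels S) := fun _ => exists_subset_mem_maxels

lemma amle_joinAC_left : amle α (joinAC α β) :=
  (amle_of_subset subset_union_left).trans (amle_maxels _)

lemma amle_joinAC_right : amle β (joinAC α β) :=
  (amle_of_subset subset_union_right).trans (amle_maxels _)

lemma amle_joinAC_iff : amle (joinAC α β) γ ↔ amle α γ ∧ amle β γ := by
  refine ⟨fun h => ⟨amle_joinAC_left.trans h, amle_joinAC_right.trans h⟩, ?_⟩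
  rintro ⟨hα, hβ⟩ C hC
  rcases mem_union.1 (mem_maxels.1 hC).1 with hCα | hCβ
  exacts [hα C hCα, hβ C hCβ]

end amle

lemma joinAC_eq_of_subset {α β κ : Fam} (hα : IsAntichain (· ⊆ ·) (α : Set (Finset ℕ)))
    (hκ : IsAntichain (· ⊆ ·) (κ : Set (Finset ℕ))) (hβκ : β ⊆ κ) (hακ : amle α κ)
    (hκα : ∀ D ∈ κ, D ∉ β → ∃ A ∈ α, D ⊆ A) : joinAC α β = κ := by
  ext C
  rw [joinAC, mem_maxels]
  constructor
  · rintro ⟨hC, hmax⟩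
    rcases mem_union.1 hC with hCα | hCβ
    · obtain ⟨D, hD, hCD⟩ := hακ C hCα
      by_cases hDβ : D ∈ β
      · rwa [hmax D (mem_union_right _ hDβ) hCD]
      · obtain ⟨A, hA, hDA⟩ := hκα D hD hDβ
        have hCA : C = A := hα.eq hCα hA (hCD.trans hDA)
        rwa [hCD.antisymm (hCA ▸ hDA)]
    · exact hβκ hCβ
  · intro hC
    have hmax : ∀ B ∈ α ∪ β, C ⊆ B → C = B := by
      intro B hB hCB
      rcases mem_union.1 hB with hBα | hBβ
      · obtain ⟨E, hE, hBE⟩ := hακ B hBα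
        exact hCB.antisymm (hκ.eq hC hE (hCB.trans hBE) ▸ hBE)
      · exact hκ.eq hC (hβκ hBβ) hCB
    refine ⟨?_, hmax⟩
    by_cases hCβ : C ∈ β
    · exact mem_union_right _ hCβ
    · obtain ⟨A, hA, hCA⟩ := hκα C hC hCβ
      rw [hmax A (mem_union_left _ hA) hCA]
      exact mem_union_left _ hA

section insertion

variable {n : ℕ} {α κ : Fam}

lemma isAntichain_image_insert (hn : ∀ A ∈ α, n ∉ A)
    (hα : IsAntichain (· ⊆ ·) (α : Set (Finset ℕ))) :
    IsAntichain (· ⊆ ·) (α.image (insert n) : Set (Finset ℕ)) := by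
  rintro _ hA' _ hB' hne hAB
  obtain ⟨A, hA, rfl⟩ := mem_image.1 hA'
  obtain ⟨B, hB, rfl⟩ := mem_image.1 hB'
  exact hne (congrArg _ (hα.eq hA hB ((insert_subset_insert_iff (hn A hA)).1 hAB)))

lemma xprod_singleton (hn : ∀ A ∈ α, n ∉ A) (hα : IsAntichain (· ⊆ ·) (α : Set (Finset ℕ))) :
    xprod α {{n}} = α.image (insert n) := by
  have himage : ((α ×ˢ ({{n}} : Fam)).image fun p => (p.1 \ sp {{n}}) ∪ (p.2 \ sp α) ∪ (p.1 ∩ p.2))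
      = α.image (insert n) := by
    rw [product_singleton, map_eq_image, image_image]
    refine image_congr fun A hA => ?_
    ext x
    by_cases hx : x = n
    · subst hx; simpa [sp, hn A hA] using hn
    · simp [sp, hx]
  rw [xprod, himage, maxels_eq_self (isAntichain_image_insert hn hα)]

def link (n : ℕ) (κ : Fam) : Fam := (κ.filter (n ∈ ·)).image (·.erase n)

lemma mem_link {B : Finset ℕ} : B ∈ link n κ ↔ n ∉ B ∧ insert n B ∈ κ := by
  simp only [link, mem_image, mem_filter]
  constructor
  · rintro ⟨C, ⟨hC, hnC⟩, rfl⟩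
    exact ⟨notMem_erase n C, (insert_erase hnC).symm ▸ hC⟩
  · rintro ⟨hnB, hB⟩
    exact ⟨insert n B, ⟨hB, mem_insert_self n B⟩, erase_insert hnB⟩

lemma image_insert_link : (link n κ).image (insert n) = κ.filter (n ∈ ·) := by
  ext C
  simp only [mem_image, mem_link, mem_filter]
  constructor
  · rintro ⟨B, ⟨-, hB⟩, rfl⟩
    exact ⟨hB, mem_insert_self n B⟩
  · rintro ⟨hC, hnC⟩
    exact ⟨C.erase n, ⟨notMem_erase n C, (insert_erase hnC).symm ▸ hC⟩, insert_erase hnC⟩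

lemma IsAC.link {N : Finset ℕ} (h : IsAC (insert n N) κ) : IsAC N (link n κ) := by
  refine ⟨fun B hB => ?_, fun A hA B hB hAB => ?_⟩
  · obtain ⟨hnB, hB⟩ := mem_link.1 hB
    rw [← erase_insert hnB]
    exact subset_insert_iff.1 (h.1 _ hB)
  · obtain ⟨hnA, hA⟩ := mem_link.1 hA
    obtain ⟨-, hB⟩ := mem_link.1 hB
    have := h.2 _ hA _ hB (insert_subset_insert n hAB)
    rw [← erase_insert hnA, this, erase_insert (mem_link.1 ‹B ∈ _›).1]

end insertion

section interval

variable {n : ℕ} {N : Finset ℕ} {α κ κ' : Fam}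

lemma mem_intervalF_singleton_empty :
    κ' ∈ intervalF N {∅} α ↔ IsAC N κ' ∧ κ'.Nonempty ∧ amle κ' α := by
  simp [mem_intervalF, amle_singleton_iff, Finset.Nonempty]

lemma mem_intervalF_joinAC_xprod (hn : n ∉ N) (hα : IsAC N α) :
    κ ∈ intervalF (insert n N) (joinAC α {{n}}) (xprod α {{n}}) ↔
      IsAC (insert n N) κ ∧ amle α κ ∧ (∃ C ∈ κ, n ∈ C) ∧ amle κ (α.image (insert n)) := by
  rw [mem_intervalF, amle_joinAC_iff, amle_singleton_iff,
    xprod_singleton (fun _ => hα.notMem hn) hα.isAntichain]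
  simp only [singleton_subset_iff, and_assoc]

lemma joinAC_xprod_mem_intervalF (hn : n ∉ N) (hα : IsAC N α)
    (hκ' : κ' ∈ intervalF N {∅} α) :
    joinAC α (xprod κ' {{n}}) ∈ intervalF (insert n N) (joinAC α {{n}}) (xprod α {{n}}) := by
  obtain ⟨hκ'N, ⟨B, hB⟩, hκ'α⟩ := mem_intervalF_singleton_empty.1 hκ'
  rw [xprod_singleton (fun _ => hκ'N.notMem hn) hκ'N.isAntichain,
    mem_intervalF_joinAC_xprod hn hα]
  refine ⟨isAC_maxels fun C hC => ?_, amle_joinAC_left, ?_, amle_joinAC_iff.2 ⟨?_, ?_⟩⟩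
  · rcases mem_union.1 hC with hCα | hCκ'
    · exact (hα.1 C hCα).trans (subset_insert n N)
    · obtain ⟨B, hB, rfl⟩ := mem_image.1 hCκ'
      exact insert_subset_insert n (hκ'N.1 B hB)
  · obtain ⟨C, hC, hBC⟩ := amle_joinAC_right (insert n B) (mem_image_of_mem _ hB)
    exact ⟨C, hC, hBC (mem_insert_self n B)⟩
  · exact fun A hA => ⟨insert n A, mem_image_of_mem _ hA, subset_insert n A⟩
  · intro _ hC
    obtain ⟨B, hB, rfl⟩ := mem_image.1 hC
    obtain ⟨A, hA, hBA⟩ := hκ'α B hB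
    exact ⟨insert n A, mem_image_of_mem _ hA, insert_subset_insert n hBA⟩

lemma link_mem_intervalF (hn : n ∉ N) (hα : IsAC N α)
    (hκ : κ ∈ intervalF (insert n N) (joinAC α {{n}}) (xprod α {{n}})) :
    link n κ ∈ intervalF N {∅} α := by
  obtain ⟨hκN, -, ⟨C, hC, hnC⟩, hκα⟩ := (mem_intervalF_joinAC_xprod hn hα).1 hκ
  refine mem_intervalF_singleton_empty.2
    ⟨hκN.link, ⟨C.erase n, mem_image_of_mem _ (mem_filter.2 ⟨hC, hnC⟩)⟩, fun B hB => ?_⟩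
  obtain ⟨hnB, hB⟩ := mem_link.1 hB
  obtain ⟨_, hA', hBA⟩ := hκα _ hB
  obtain ⟨A, hA, rfl⟩ := mem_image.1 hA'
  exact ⟨A, hA, (insert_subset_insert_iff hnB).1 hBA⟩

lemma joinAC_xprod_link (hn : n ∉ N) (hα : IsAC N α)
    (hκ : κ ∈ intervalF (insert n N) (joinAC α {{n}}) (xprod α {{n}})) :
    joinAC α (xprod (link n κ) {{n}}) = κ := by
  obtain ⟨hκN, hακ, -, hκα⟩ := (mem_intervalF_joinAC_xprod hn hα).1 hκ
  have hlink : IsAC N (link n κ) := hκN.link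
  rw [xprod_singleton (fun _ => hlink.notMem hn) hlink.isAntichain, image_insert_link]
  refine joinAC_eq_of_subset hα.isAntichain hκN.isAntichain (filter_subset _ _) hακ
    fun D hD hDn => ?_
  obtain ⟨_, hA', hDA⟩ := hκα D hD
  obtain ⟨A, hA, rfl⟩ := mem_image.1 hA'
  exact ⟨A, hA, (subset_insert_iff_of_notMem fun hnD => hDn (mem_filter.2 ⟨hD, hnD⟩)).1 hDA⟩

lemma link_joinAC_xprod (hn : n ∉ N) (hα : IsAC N α) (hκ' : IsAC N κ') :
    link n (joinAC α (xprod κ' {{n}})) = κ' := by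
  have hnκ' : ∀ B ∈ κ', n ∉ B := fun _ => hκ'.notMem hn
  rw [xprod_singleton hnκ' hκ'.isAntichain]
  ext B
  rw [mem_link, joinAC, mem_maxels]
  constructor
  · rintro ⟨hnB, hBmem, -⟩
    rcases mem_union.1 hBmem with hBα | hBκ'
    · exact absurd (mem_insert_self n B) (hα.notMem hn hBα)
    · obtain ⟨B', hB', hB'B⟩ := mem_image.1 hBκ'
      rwa [← erase_insert hnB, ← hB'B, erase_insert (hnκ' B' hB')]
  · intro hB
    have hnB := hnκ' B hB
    refine ⟨hnB, mem_union_right _ (mem_image_of_mem _ hB), fun D hD hBD => ?_⟩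
    rcases mem_union.1 hD with hDα | hDκ'
    · exact absurd (hBD (mem_insert_self n B)) (hα.notMem hn hDα)
    · obtain ⟨B', hB', rfl⟩ := mem_image.1 hDκ'
      rw [hκ'.2 B hB B' hB' ((insert_subset_insert_iff hnB).1 hBD)]

end interval

theorem interval_singleton_bijection_general (n : ℕ) (h : 1 < n) (α : Fam)
    (hα : IsAC (Finset.Icc 1 (n - 1)) α) :
    (∀ κ ∈ intervalF (Finset.Icc 1 n)
        (joinAC α {({n} : Finset ℕ)}) (xprod α {({n} : Finset ℕ)}),
      ∃! κ' : Fam,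
        κ' ∈ intervalF (Finset.Icc 1 (n - 1)) ({(∅ : Finset ℕ)} : Fam) α ∧
        κ = joinAC α (xprod κ' {({n} : Finset ℕ)})) ∧
    (intervalF (Finset.Icc 1 n)
        (joinAC α {({n} : Finset ℕ)}) (xprod α {({n} : Finset ℕ)})).card =
      (intervalF (Finset.Icc 1 (n - 1)) ({(∅ : Finset ℕ)} : Fam) α).card := by
  have hn : n ∉ Icc 1 (n - 1) := by simp only [mem_Icc]; omega
  have hIcc : Icc 1 n = insert n (Icc 1 (n - 1)) := by
    ext x; simp only [mem_Icc, mem_insert]; omega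
  rw [hIcc]
  refine ⟨fun κ hκ => ⟨link n κ, ⟨link_mem_intervalF hn hα hκ,
    (joinAC_xprod_link hn hα hκ).symm⟩, ?_⟩, ?_⟩
  · rintro κ' ⟨hκ', rfl⟩
    exact (link_joinAC_xprod hn hα (mem_intervalF.1 hκ').1).symm
  · exact card_nbij' (link n) (fun κ' => joinAC α (xprod κ' {({n} : Finset ℕ)}))
      (fun _ => link_mem_intervalF hn hα) (fun _ => joinAC_xprod_mem_intervalF hn hα)
      (fun _ => joinAC_xprod_link hn hα)
      (fun _ hκ' => link_joinAC_xprod hn hα (mem_intervalF.1 hκ').1)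

/-- bijection `[α ∨ {{n}}, α × {{n}}] ≃ [{∅}, α]`. -/
theorem interval_singleton_bijection (n : ℕ) (h : 1 < n) (α : Fam)
    (hα : IsAC (Finset.Icc 1 (n - 1)) α) (hne : α ≠ ∅) :
    (∀ κ ∈ intervalF (Finset.Icc 1 n)
        (joinAC α {({n} : Finset ℕ)}) (xprod α {({n} : Finset ℕ)}),
      ∃! κ' : Fam,
        κ' ∈ intervalF (Finset.Icc 1 (n - 1)) ({(∅ : Finset ℕ)} : Fam) α ∧
        κ = joinAC α (xprod κ' {({n} : Finset ℕ)})) ∧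
    (intervalF (Finset.Icc 1 n)
        (joinAC α {({n} : Finset ℕ)}) (xprod α {({n} : Finset ℕ)})).card =
      (intervalF (Finset.Icc 1 (n - 1)) ({(∅ : Finset ℕ)} : Fam) α).card :=
  interval_singleton_bijection_general n h α hα
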